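/- Let V be a unital multiplicative partial isometry on H with unit elements 𝟙 = λ(ε̂) ∈ A and 𝟙̂ = ρ(ε) ∈ Â. Then 𝟙 = 𝟙̂ as operators on H. -/

import Mathlib

/-!
From `VV*V = V`, the pentagon equation and the second hexagon equation one gets
`V₂₃ V₁₂ V₂₃* = V₁₂ V₁₃` and `V₁₂* V₂₃ V₁₂ = V₁₃ V₂₃`. The unit hypotheses say that
`1 ⊗ 𝟙` and `𝟙̂ ⊗ 1` are two-sided units for `V`. Inserting `𝟙̂` on the second leg of
the first identity and slicing its third leg with `ε` gives `(1 ⊗ 𝟙̂) V = V`; inserting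
`𝟙` on the second leg of the second identity and slicing its first leg with `ε̂` gives
`V (𝟙 ⊗ 1) = V`. Slicing these two with `ε̂ ⊗ id` and `id ⊗ ε` yields `𝟙 = 𝟙̂ 𝟙 = 𝟙̂`.
-/

open Matrix

namespace MPIpaper

variable {n : Type*} [Fintype n] [DecidableEq n]

noncomputable section

/-- `W₁₂ = W ⊗ 1` on `H ⊗ H ⊗ H`. -/
def leg12 (V : Matrix (n × n) (n × n) ℂ) : Matrix (n × n × n) (n × n × n) ℂ :=
  Matrix.of fun p q => V (p.1, p.2.1) (q.1, q.2.1) * (if p.2.2 = q.2.2 then (1 : ℂ) else 0)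

/-- `W₂₃ = 1 ⊗ W` on `H ⊗ H ⊗ H`. -/
def leg23 (V : Matrix (n × n) (n × n) ℂ) : Matrix (n × n × n) (n × n × n) ℂ :=
  Matrix.of fun p q => (if p.1 = q.1 then (1 : ℂ) else 0) * V p.2 q.2

/-- `W₁₃ = (1⊗Σ)(W⊗1)(1⊗Σ)` on `H ⊗ H ⊗ H`. -/
def leg13 (V : Matrix (n × n) (n × n) ℂ) : Matrix (n × n × n) (n × n × n) ℂ :=
  Matrix.of fun p q => V (p.1, p.2.2) (q.1, q.2.2) * (if p.2.1 = q.2.1 then (1 : ℂ) else 0)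

/-- A multiplicative partial isometry: `VV*V = V`, the pentagon equation, and the
three auxiliary (hexagon-type) equations. -/
def IsMPI (V : Matrix (n × n) (n × n) ℂ) : Prop :=
  V * Vᴴ * V = V ∧
  leg23 V * leg12 V = leg12 V * leg13 V * leg23 V ∧
  leg13 V * leg23 V * (leg23 V)ᴴ = (leg12 V)ᴴ * leg12 V * leg13 V ∧
  leg12 V * (leg12 V)ᴴ * leg23 V = leg23 V * leg12 V * (leg12 V)ᴴ ∧
  leg12 V * (leg23 V)ᴴ * leg23 V = (leg23 V)ᴴ * leg23 V * leg12 V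

/-- `λ(ω) = (ω ⊗ id)(V)`. -/
def lam (ω : Matrix n n ℂ →ₗ[ℂ] ℂ) (V : Matrix (n × n) (n × n) ℂ) : Matrix n n ℂ :=
  Matrix.of fun i j => ω (Matrix.of fun a b => V (a, i) (b, j))

/-- `ρ(ω) = (id ⊗ ω)(V)`. -/
def rho (ω : Matrix n n ℂ →ₗ[ℂ] ℂ) (V : Matrix (n × n) (n × n) ℂ) : Matrix n n ℂ :=
  Matrix.of fun i j => ω (Matrix.of fun a b => V (i, a) (j, b))

/-- `1 ⊗ X` on `H ⊗ H`. -/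
def oneTensor (X : Matrix n n ℂ) : Matrix (n × n) (n × n) ℂ :=
  Matrix.of fun p q => (if p.1 = q.1 then (1 : ℂ) else 0) * X p.2 q.2

/-- `X ⊗ 1` on `H ⊗ H`. -/
def tensorOne (X : Matrix n n ℂ) : Matrix (n × n) (n × n) ℂ :=
  Matrix.of fun p q => X p.1 q.1 * (if p.2 = q.2 then (1 : ℂ) else 0)

/-- `Δ(X) = V (X ⊗ 1) V*`. -/
def Delta (V : Matrix (n × n) (n × n) ℂ) (X : Matrix n n ℂ) : Matrix (n × n) (n × n) ℂ :=
  V * tensorOne X * Vᴴ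

/-- `Δ̂(X) = V* (1 ⊗ X) V`. -/
def hatDelta (V : Matrix (n × n) (n × n) ℂ) (X : Matrix n n ℂ) : Matrix (n × n) (n × n) ℂ :=
  Vᴴ * oneTensor X * V

/-- `(ω ⊗ ω')(W)` for an operator `W` on `H ⊗ H`. -/
def applyBoth (ω ω' : Matrix n n ℂ →ₗ[ℂ] ℂ) (W : Matrix (n × n) (n × n) ℂ) : ℂ :=
  ω (Matrix.of fun i j => ω' (Matrix.of fun k l => W (i, k) (j, l)))

end

def sliceFirst (ω : Matrix n n ℂ →ₗ[ℂ] ℂ) (W : Matrix (n × n × n) (n × n × n) ℂ) :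
    Matrix (n × n) (n × n) ℂ :=
  Matrix.of fun p q => ω (Matrix.of fun a b => W (a, p) (b, q))

def sliceThird (ω : Matrix n n ℂ →ₗ[ℂ] ℂ) (W : Matrix (n × n × n) (n × n × n) ℂ) :
    Matrix (n × n) (n × n) ℂ :=
  Matrix.of fun p q => ω (Matrix.of fun u v => W (p.1, p.2, u) (q.1, q.2, v))

section LinearFunctional

variable {R κ m m' : Type*} [CommSemiring R] [Fintype κ]

lemma map_of_sum_mul_left (ω : Matrix m m' R →ₗ[R] R) (c : κ → R)
    (f : κ → m → m' → R) :
    ω (Matrix.of fun a b => ∑ k, c k * f k a b) = ∑ k, c k * ω (Matrix.of (f k)) := by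
  have : (Matrix.of fun a b => ∑ k, c k * f k a b) = ∑ k, c k • Matrix.of (f k) := by
    ext a b
    simp [Matrix.sum_apply]
  simp only [this, map_sum, LinearMap.map_smul, smul_eq_mul]

lemma map_of_sum_mul_right (ω : Matrix m m' R →ₗ[R] R) (c : κ → R)
    (f : κ → m → m' → R) :
    ω (Matrix.of fun a b => ∑ k, f k a b * c k) = ∑ k, ω (Matrix.of (f k)) * c k := by
  simp only [mul_comm _ (c _), map_of_sum_mul_left]

end LinearFunctional

lemma oneTensor_mul_apply (X : Matrix n n ℂ) (W : Matrix (n × n) (n × n) ℂ) (a i : n)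
    (q : n × n) : (oneTensor X * W) (a, i) q = ∑ k, X i k * W (a, k) q := by
  simp [Matrix.mul_apply, oneTensor, Fintype.sum_prod_type, ite_mul]

lemma mul_oneTensor_apply (X : Matrix n n ℂ) (W : Matrix (n × n) (n × n) ℂ) (p : n × n)
    (b j : n) : (W * oneTensor X) p (b, j) = ∑ k, W p (b, k) * X k j := by
  simp [Matrix.mul_apply, oneTensor, Fintype.sum_prod_type, mul_ite, mul_comm]

lemma tensorOne_mul_apply (X : Matrix n n ℂ) (W : Matrix (n × n) (n × n) ℂ) (i a : n)
    (q : n × n) : (tensorOne X * W) (i, a) q = ∑ k, X i k * W (k, a) q := by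
  simp [Matrix.mul_apply, tensorOne, Fintype.sum_prod_type, ite_mul]

lemma mul_tensorOne_apply (X : Matrix n n ℂ) (W : Matrix (n × n) (n × n) ℂ) (p : n × n)
    (j b : n) : (W * tensorOne X) p (j, b) = ∑ k, W p (k, b) * X k j := by
  simp [Matrix.mul_apply, tensorOne, Fintype.sum_prod_type, mul_ite]

lemma lam_oneTensor_mul (ω : Matrix n n ℂ →ₗ[ℂ] ℂ) (X : Matrix n n ℂ)
    (W : Matrix (n × n) (n × n) ℂ) : lam ω (oneTensor X * W) = X * lam ω W := by
  ext i j
  rw [Matrix.mul_apply]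
  simp only [lam, Matrix.of_apply, oneTensor_mul_apply, map_of_sum_mul_left]

lemma lam_mul_oneTensor (ω : Matrix n n ℂ →ₗ[ℂ] ℂ) (X : Matrix n n ℂ)
    (W : Matrix (n × n) (n × n) ℂ) : lam ω (W * oneTensor X) = lam ω W * X := by
  ext i j
  rw [Matrix.mul_apply]
  simp only [lam, Matrix.of_apply, mul_oneTensor_apply, map_of_sum_mul_right]

lemma rho_tensorOne_mul (ω : Matrix n n ℂ →ₗ[ℂ] ℂ) (X : Matrix n n ℂ)
    (W : Matrix (n × n) (n × n) ℂ) : rho ω (tensorOne X * W) = X * rho ω W := by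
  ext i j
  rw [Matrix.mul_apply]
  simp only [rho, Matrix.of_apply, tensorOne_mul_apply, map_of_sum_mul_left]

lemma rho_mul_tensorOne (ω : Matrix n n ℂ →ₗ[ℂ] ℂ) (X : Matrix n n ℂ)
    (W : Matrix (n × n) (n × n) ℂ) : rho ω (W * tensorOne X) = rho ω W * X := by
  ext i j
  rw [Matrix.mul_apply]
  simp only [rho, Matrix.of_apply, mul_tensorOne_apply, map_of_sum_mul_right]

lemma eq_of_forall_lam_eq {m : Type*} {W W' : Matrix (m × m) (m × m) ℂ}
    (h : ∀ ω, lam ω W = lam ω W') : W = W' := by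
  ext ⟨a, i⟩ ⟨b, j⟩
  exact congrFun (congrFun (h (Matrix.entryLinearMap ℂ ℂ a b)) i) j

lemma eq_of_forall_rho_eq {m : Type*} {W W' : Matrix (m × m) (m × m) ℂ}
    (h : ∀ ω, rho ω W = rho ω W') : W = W' := by
  ext ⟨i, a⟩ ⟨j, b⟩
  exact congrFun (congrFun (h (Matrix.entryLinearMap ℂ ℂ a b)) i) j

section

variable {m : Type*} [DecidableEq m]

lemma leg12_conjTranspose (A : Matrix (m × m) (m × m) ℂ) : leg12 Aᴴ = (leg12 A)ᴴ := by
  ext ⟨a, i, u⟩ ⟨b, j, v⟩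
  simp only [leg12, Matrix.conjTranspose_apply, Matrix.of_apply, star_mul', eq_comm (a := u)]
  split_ifs <;> simp

lemma leg23_conjTranspose (A : Matrix (m × m) (m × m) ℂ) : leg23 Aᴴ = (leg23 A)ᴴ := by
  ext ⟨a, i, u⟩ ⟨b, j, v⟩
  simp only [leg23, Matrix.conjTranspose_apply, Matrix.of_apply, star_mul', eq_comm (a := a)]
  split_ifs <;> simp

lemma leg23_tensorOne (X : Matrix m m ℂ) : leg23 (tensorOne X) = leg12 (oneTensor X) := by
  ext ⟨a, i, u⟩ ⟨b, j, v⟩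
  simp [leg12, leg23, oneTensor, tensorOne]

lemma sliceThird_leg13 (ω : Matrix m m ℂ →ₗ[ℂ] ℂ) (B : Matrix (m × m) (m × m) ℂ) :
    sliceThird ω (leg13 B) = tensorOne (rho ω B) := by
  ext ⟨a, i⟩ ⟨b, j⟩
  simp only [sliceThird, leg13, tensorOne, rho, Matrix.of_apply]
  split_ifs <;> simp only [mul_one, mul_zero]
  exact map_zero ω

lemma sliceFirst_leg13 (ω : Matrix m m ℂ →ₗ[ℂ] ℂ) (B : Matrix (m × m) (m × m) ℂ) :
    sliceFirst ω (leg13 B) = oneTensor (lam ω B) := by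
  ext ⟨i, u⟩ ⟨j, v⟩
  simp only [sliceFirst, leg13, oneTensor, lam, Matrix.of_apply]
  split_ifs <;> simp only [mul_one, mul_zero, one_mul, zero_mul]
  exact map_zero ω

end

lemma leg12_mul (A B : Matrix (n × n) (n × n) ℂ) : leg12 (A * B) = leg12 A * leg12 B := by
  ext ⟨a, i, u⟩ ⟨b, j, v⟩
  simp [leg12, Matrix.mul_apply, Fintype.sum_prod_type, ite_mul]

lemma leg23_mul (A B : Matrix (n × n) (n × n) ℂ) : leg23 (A * B) = leg23 A * leg23 B := by
  ext ⟨a, i, u⟩ ⟨b, j, v⟩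
  simp [leg23, Matrix.mul_apply, Fintype.sum_prod_type, ite_mul, Finset.mul_sum]

lemma leg12_mul_apply (A : Matrix (n × n) (n × n) ℂ) (W : Matrix (n × n × n) (n × n × n) ℂ)
    (a i u : n) (q : n × n × n) :
    (leg12 A * W) (a, i, u) q = ∑ p : n × n, A (a, i) p * W (p.1, p.2, u) q := by
  simp [Matrix.mul_apply, leg12, Fintype.sum_prod_type, ite_mul]

lemma mul_leg23_apply (W : Matrix (n × n × n) (n × n × n) ℂ) (B : Matrix (n × n) (n × n) ℂ)
    (a : n) (p : n × n) (b : n) (q : n × n) :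
    (W * leg23 B) (a, p) (b, q) = ∑ r : n × n, W (a, p) (b, r) * B r q := by
  simp [Matrix.mul_apply, leg23, Fintype.sum_prod_type, mul_ite]

lemma sliceThird_leg12_mul (ω : Matrix n n ℂ →ₗ[ℂ] ℂ) (A : Matrix (n × n) (n × n) ℂ)
    (W : Matrix (n × n × n) (n × n × n) ℂ) :
    sliceThird ω (leg12 A * W) = A * sliceThird ω W := by
  ext ⟨a, i⟩ q
  rw [Matrix.mul_apply]
  simp only [sliceThird, Matrix.of_apply, leg12_mul_apply, map_of_sum_mul_left]

lemma sliceFirst_mul_leg23 (ω : Matrix n n ℂ →ₗ[ℂ] ℂ) (W : Matrix (n × n × n) (n × n × n) ℂ)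
    (B : Matrix (n × n) (n × n) ℂ) : sliceFirst ω (W * leg23 B) = sliceFirst ω W * B := by
  ext p q
  rw [Matrix.mul_apply]
  simp only [sliceFirst, Matrix.of_apply, mul_leg23_apply, map_of_sum_mul_right]

section Units

variable {V : Matrix (n × n) (n × n) ℂ} {X : Matrix n n ℂ}

lemma oneTensor_mul_eq_self_of_forall (h : ∀ ω, X * lam ω V = lam ω V) :
    oneTensor X * V = V :=
  eq_of_forall_lam_eq fun ω => by rw [lam_oneTensor_mul, h]

lemma mul_oneTensor_eq_self_of_forall (h : ∀ ω, lam ω V * X = lam ω V) :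
    V * oneTensor X = V :=
  eq_of_forall_lam_eq fun ω => by rw [lam_mul_oneTensor, h]

lemma tensorOne_mul_eq_self_of_forall (h : ∀ ω, X * rho ω V = rho ω V) :
    tensorOne X * V = V :=
  eq_of_forall_rho_eq fun ω => by rw [rho_tensorOne_mul, h]

lemma mul_tensorOne_eq_self_of_forall (h : ∀ ω, rho ω V * X = rho ω V) :
    V * tensorOne X = V :=
  eq_of_forall_rho_eq fun ω => by rw [rho_mul_tensorOne, h]

end Units

lemma leg12_mul_conjTranspose_mul_self {V : Matrix (n × n) (n × n) ℂ} (h : V * Vᴴ * V = V) :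
    leg12 V * (leg12 V)ᴴ * leg12 V = leg12 V := by
  rw [← leg12_conjTranspose, ← leg12_mul, ← leg12_mul, h]

lemma leg23_mul_conjTranspose_mul_self {V : Matrix (n × n) (n × n) ℂ} (h : V * Vᴴ * V = V) :
    leg23 V * (leg23 V)ᴴ * leg23 V = leg23 V := by
  rw [← leg23_conjTranspose, ← leg23_mul, ← leg23_mul, h]

namespace IsMPI

variable {V : Matrix (n × n) (n × n) ℂ} {X : Matrix n n ℂ}

lemma leg23_mul_leg12_mul_conjTranspose (hV : IsMPI V) :
    leg23 V * leg12 V * (leg23 V)ᴴ = leg12 V * leg13 V := by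
  obtain ⟨hiso, hpent, hhex, -, -⟩ := hV
  calc leg23 V * leg12 V * (leg23 V)ᴴ
        = leg12 V * (leg13 V * leg23 V * (leg23 V)ᴴ) := by rw [hpent]; simp only [mul_assoc]
    _ = leg12 V * (leg12 V)ᴴ * leg12 V * leg13 V := by rw [hhex]; simp only [mul_assoc]
    _ = leg12 V * leg13 V := by rw [leg12_mul_conjTranspose_mul_self hiso]

lemma conjTranspose_leg12_mul_leg23_mul_leg12 (hV : IsMPI V) :
    (leg12 V)ᴴ * (leg23 V * leg12 V) = leg13 V * leg23 V := by
  obtain ⟨hiso, hpent, hhex, -, -⟩ := hV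
  calc (leg12 V)ᴴ * (leg23 V * leg12 V)
        = (leg12 V)ᴴ * leg12 V * leg13 V * leg23 V := by rw [hpent]; simp only [mul_assoc]
    _ = leg13 V * (leg23 V * (leg23 V)ᴴ * leg23 V) := by rw [← hhex]; simp only [mul_assoc]
    _ = leg13 V * leg23 V := by rw [leg23_mul_conjTranspose_mul_self hiso]

lemma leg23_tensorOne_mul_leg12_mul_leg13 (hV : IsMPI V) (hX : tensorOne X * V = V) :
    leg23 (tensorOne X) * (leg12 V * leg13 V) = leg12 V * leg13 V := by
  rw [← hV.leg23_mul_leg12_mul_conjTranspose, ← mul_assoc, ← mul_assoc, ← leg23_mul, hX]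

lemma leg13_mul_leg23_mul_leg23_tensorOne (hV : IsMPI V) (hX : V * oneTensor X = V) :
    leg13 V * leg23 V * leg23 (tensorOne X) = leg13 V * leg23 V := by
  rw [← hV.conjTranspose_leg12_mul_leg23_mul_leg12, leg23_tensorOne, mul_assoc, mul_assoc,
    ← leg12_mul, hX]

lemma oneTensor_mul_eq_self (hV : IsMPI V) {ω : Matrix n n ℂ →ₗ[ℂ] ℂ}
    (hX : tensorOne X * V = V) (hω : V * tensorOne (rho ω V) = V) : oneTensor X * V = V := by
  have h := congrArg (sliceThird ω) (hV.leg23_tensorOne_mul_leg12_mul_leg13 hX)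
  rwa [leg23_tensorOne, sliceThird_leg12_mul, sliceThird_leg12_mul, sliceThird_leg13, hω] at h

lemma mul_tensorOne_eq_self (hV : IsMPI V) {ω : Matrix n n ℂ →ₗ[ℂ] ℂ}
    (hX : V * oneTensor X = V) (hω : oneTensor (lam ω V) * V = V) : V * tensorOne X = V := by
  have h := congrArg (sliceFirst ω) (hV.leg13_mul_leg23_mul_leg23_tensorOne hX)
  rwa [sliceFirst_mul_leg23, sliceFirst_mul_leg23, sliceFirst_leg13, hω] at h

end IsMPI

theorem statement15 (V : Matrix (n × n) (n × n) ℂ) (hV : IsMPI V)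
    (ε εhat : Matrix n n ℂ →ₗ[ℂ] ℂ)
    (hεhat : ∀ ω : Matrix n n ℂ →ₗ[ℂ] ℂ,
      lam εhat V * lam ω V = lam ω V ∧ lam ω V * lam εhat V = lam ω V)
    (hε : ∀ ω : Matrix n n ℂ →ₗ[ℂ] ℂ,
      rho ε V * rho ω V = rho ω V ∧ rho ω V * rho ε V = rho ω V) :
    lam εhat V = rho ε V := by
  obtain ⟨hlam_left, hlam_right⟩ := forall_and.mp hεhat
  obtain ⟨hrho_left, hrho_right⟩ := forall_and.mp hε
  have hrho_absorb : oneTensor (rho ε V) * V = V :=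
    hV.oneTensor_mul_eq_self (tensorOne_mul_eq_self_of_forall hrho_left)
      (mul_tensorOne_eq_self_of_forall hrho_right)
  have hlam_absorb : V * tensorOne (lam εhat V) = V :=
    hV.mul_tensorOne_eq_self (mul_oneTensor_eq_self_of_forall hlam_right)
      (oneTensor_mul_eq_self_of_forall hlam_left)
  calc lam εhat V = lam εhat (oneTensor (rho ε V) * V) := by rw [hrho_absorb]
    _ = rho ε V * lam εhat V := lam_oneTensor_mul ..
    _ = rho ε (V * tensorOne (lam εhat V)) := (rho_mul_tensorOne ..).symm
    _ = rho ε V := by rw [hlam_absorb]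

end MPIpaper
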